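/- As ν → ∞, the sums Σ_{j=0}^{ν−1} (1/τ_j)·∏_{i=j}^{ν−1} ε_i converge to 2/((2 − q)·τ₀ + 2). -/

import Mathlib

open Filter Finset Topology

/-!
With `r = 2 / q > 1`, the closed form for `τ` is equivalent to the recursion
`τ (n + 1) = r * (1 + τ n)`, under which `ε n = r * τ n / τ (n + 1)` telescopes:
the weighted sum `W n` satisfies `W (n + 1) = (W n + 1 / τ n) * ε n`, whence
`W n = 1 - r ^ n * τ 0 / τ n`. Finally `τ n / r ^ n` is `τ 0` plus a partial sum of the
geometric series in `r⁻¹`, so it tends to `τ 0 + (1 - r⁻¹)⁻¹`.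
-/

theorem Finset.sum_range_succ_mul_prod_Ico {R : Type*} [CommSemiring R] (a ε : ℕ → R) (n : ℕ) :
    ∑ j ∈ range (n + 1), a j * ∏ i ∈ Ico j (n + 1), ε i =
      (∑ j ∈ range n, a j * ∏ i ∈ Ico j n, ε i + a n) * ε n := by
  rw [sum_range_succ, Nat.Ico_succ_singleton, prod_singleton, add_mul, sum_mul]
  congr 1
  refine sum_congr rfl fun j hj => ?_
  rw [prod_Ico_succ_top (mem_range.mp hj).le, mul_assoc]

theorem affine_recursion_of_closed_form {r : ℝ} {τ : ℕ → ℝ} (hr : r ≠ 1)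
    (hτ : ∀ n, τ n = r ^ n * τ 0 + (r ^ (n + 1) - r) / (r - 1)) (n : ℕ) :
    τ (n + 1) = r * (1 + τ n) := by
  have : r - 1 ≠ 0 := sub_ne_zero.mpr hr
  rw [hτ (n + 1), hτ n]
  field_simp
  ring

section AffineRecursion

variable {r : ℝ} {τ : ℕ → ℝ} (hrec : ∀ n, τ (n + 1) = r * (1 + τ n))
include hrec

theorem pos_of_affine_recursion (hr : 0 < r) (h0 : 0 < τ 0) (n : ℕ) : 0 < τ n := by
  induction n with
  | zero => exact h0
  | succ n ih => rw [hrec]; positivity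

theorem weighted_sum_prod_eq_of_affine_recursion (hr : 0 < r) (h0 : 0 < τ 0) (n : ℕ) :
    ∑ j ∈ range n, (1 / τ j) * ∏ i ∈ Ico j n, τ i / (1 + τ i) = 1 - r ^ n * τ 0 / τ n := by
  induction n with
  | zero => simp [h0.ne']
  | succ n ih =>
    have hτn := pos_of_affine_recursion hrec hr h0 n
    rw [sum_range_succ_mul_prod_Ico, ih, hrec]
    field_simp
    ring

theorem div_pow_eq_add_geom_sum_of_affine_recursion (hr : r ≠ 0) (n : ℕ) :
    τ n / r ^ n = τ 0 + ∑ k ∈ range n, r⁻¹ ^ k := by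
  induction n with
  | zero => simp
  | succ n ih =>
    rw [sum_range_succ, ← add_assoc, ← ih, hrec, inv_pow]
    field_simp
    ring

theorem tendsto_div_pow_of_affine_recursion (hr : 1 < r) :
    Tendsto (fun n => τ n / r ^ n) atTop (𝓝 (τ 0 + (1 - r⁻¹)⁻¹)) := by
  have hgeom : HasSum (fun k => r⁻¹ ^ k) (1 - r⁻¹)⁻¹ :=
    hasSum_geometric_of_lt_one (by positivity) (inv_lt_one_of_one_lt₀ hr)
  simp_rw [div_pow_eq_add_geom_sum_of_affine_recursion hrec (by positivity)]
  exact hgeom.tendsto_sum_nat.const_add _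

theorem tendsto_weighted_sum_prod_of_affine_recursion (hr : 1 < r) (h0 : 0 < τ 0) :
    Tendsto (fun n => ∑ j ∈ range n, (1 / τ j) * ∏ i ∈ Ico j n, τ i / (1 + τ i)) atTop
      (𝓝 (1 - τ 0 / (τ 0 + (1 - r⁻¹)⁻¹))) := by
  have hlim : τ 0 + (1 - r⁻¹)⁻¹ ≠ 0 := by
    have : 0 < 1 - r⁻¹ := sub_pos.mpr (inv_lt_one_of_one_lt₀ hr)
    positivity
  refine ((tendsto_const_nhds.div (tendsto_div_pow_of_affine_recursion hrec hr) hlim).const_sub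
    1).congr fun n => ?_
  rw [Pi.div_apply, weighted_sum_prod_eq_of_affine_recursion hrec (by linarith) h0,
    div_div_eq_mul_div, mul_comm]

end AffineRecursion

theorem moser_weighted_sum_limit_general
    (q τ₀ : ℝ) (hq1 : 1 < q) (hq2 : q < 2) (hτ₀ : 0 < τ₀)
    (τ ε : ℕ → ℝ)
    (hτzero : τ 0 = τ₀)
    (hτ : ∀ ν : ℕ, 1 ≤ ν →
      τ ν = (2 / q) ^ ν * τ₀ + ((2 / q) ^ (ν + 1) - 2 / q) / (2 / q - 1))
    (hε : ∀ ν : ℕ, ε ν = τ ν / (1 + τ ν)) :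
    Tendsto
      (fun ν : ℕ => ∑ j ∈ Finset.range ν, (1 / τ j) * ∏ i ∈ Finset.Ico j ν, ε i)
      atTop (nhds (2 / ((2 - q) * τ₀ + 2))) := by
  obtain rfl : ε = fun ν => τ ν / (1 + τ ν) := funext hε
  subst hτzero
  set r := 2 / q with hr_def
  have hr : 1 < r := (one_lt_div (by linarith)).mpr hq2
  have hrec : ∀ n, τ (n + 1) = r * (1 + τ n) :=
    affine_recursion_of_closed_form hr.ne' fun ν => by
      rcases ν with _ | ν
      · simp
      · exact hτ _ ν.succ_pos
  convert tendsto_weighted_sum_prod_of_affine_recursion hrec hr hτ₀ using 2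
  have hq0 : q ≠ 0 := by linarith
  have h2q : 0 < 2 - q := by linarith
  have hden : (2 - q) * τ 0 + 2 ≠ 0 := by positivity
  rw [hr_def]
  field_simp
  ring

/-- Convergence of the weighted sums Σ_j (1/τ_j)·∏_{i=j}^{ν−1} ε_i. -/
theorem moser_weighted_sum_limit
    (q τ₀ : ℝ) (hq1 : 1 < q) (hq2 : q < 2) (hτ₀ : 0 < τ₀)
    (τ β ε : ℕ → ℝ)
    (hτzero : τ 0 = τ₀) (hβzero : β 0 = 0)
    (hτ : ∀ ν : ℕ, 1 ≤ ν →
      τ ν = (2 / q) ^ ν * τ₀ + ((2 / q) ^ (ν + 1) - 2 / q) / (2 / q - 1))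
    (hβ : ∀ ν : ℕ, 1 ≤ ν →
      β ν = ((2 / q) ^ (ν + 1) - 2 / q) / (2 / q - 1))
    (hε : ∀ ν : ℕ, ε ν = τ ν / (1 + τ ν)) :
    Tendsto
      (fun ν : ℕ => ∑ j ∈ Finset.range ν, (1 / τ j) * ∏ i ∈ Finset.Ico j ν, ε i)
      atTop (nhds (2 / ((2 - q) * τ₀ + 2))) :=
  moser_weighted_sum_limit_general q τ₀ hq1 hq2 hτ₀ τ ε hτzero hτ hε
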